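/- arXiv:math/9806099 — 5 statements merged into one kernel-verified Lean document; each statement's English description precedes it below -/
import Mathlib

section
/- Suppose the real constants V_min, V_max, K satisfy V_min ≤ V(x) ≤ V_max and |V'(x)| ≤ K for all x ≥ 0, and suppose in addition that V''(x) ≤ 0 for all x ≥ 0. Then for every Orr–Sommerfeld eigenpair (u, λ): a·R·V_min − (R/2)·K ≤ Im λ ≤ a·R·V_max. In particular, if moreover V ≤ 1 on [0,∞), then Im λ ≤ a·R. -/
open MeasureTheory Set Complex

/-- Iterated derivative on `[0, ∞)` of a complex-valued function. -/
noncomputable def Dc (f : ℝ → ℂ) (n : ℕ) : ℝ → ℂ := iteratedDerivWithin n f (Set.Ici 0)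

/-- Iterated derivative on `[0, ∞)` of a real-valued function. -/
noncomputable def Dr (f : ℝ → ℝ) (n : ℕ) : ℝ → ℝ := iteratedDerivWithin n f (Set.Ici 0)

/-- `f ∈ L²(0, ∞)`. -/
def L2 (f : ℝ → ℂ) : Prop := MemLp f 2 (volume.restrict (Set.Ioi 0))

/-- `(u, λ)` is an eigenpair of the Orr–Sommerfeld problem on `[0, ∞)` with wave
number `a`, Reynolds number `R` and flow profile `V`:  `u` is four times continuously
differentiable, not identically zero, `u, u', u'', u''', u''''` are in `L²(0, ∞)`,
`u(0) = u'(0) = 0`, and the Orr–Sommerfeld equation holds on `[0, ∞)`. -/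
def IsOSEigenpair (a R : ℝ) (V : ℝ → ℝ) (u : ℝ → ℂ) (lam : ℂ) : Prop :=
  ContDiffOn ℝ 4 u (Set.Ici 0) ∧
  (∀ n : ℕ, n ≤ 4 → L2 (Dc u n)) ∧
  (∃ x : ℝ, 0 ≤ x ∧ u x ≠ 0) ∧
  u 0 = 0 ∧ Dc u 1 0 = 0 ∧
  ∀ x : ℝ, 0 ≤ x →
    Dc u 4 x - 2 * (a : ℂ)^2 * Dc u 2 x + (a : ℂ)^4 * u x
      + Complex.I * (a : ℂ) * (R : ℂ) *
        ((V x : ℂ) * (-(Dc u 2 x) + (a : ℂ)^2 * u x) + (Dr V 2 x : ℂ) * u x)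
    = lam * (-(Dc u 2 x) + (a : ℂ)^2 * u x)

/-!
Test the equation against `conj u` and integrate over `(0, ∞)`. Instead of integrating by parts
term by term, use the flux `osFlux c`: after `u''''` is eliminated with the equation, the
imaginary part of its derivative is `Im λ · (|u'|² + a²|u|²) − aR · P_c` with
`P_c = productionDensity c = V (|u'|² + a²|u|²) + (1 − c) V'' |u|² + (1 − 2c) V' Re (u' ū)`.
The flux vanishes at `0` by the boundary conditions, and the flux and its derivative are
integrable (`V'' |u|²` is, because the equation expresses `V'' u` through `L²` functions), so
the integral of the derivative vanishes: `Im λ ∫ (|u'|² + a²|u|²) = aR ∫ P_c`.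
For `c = 1/2` the `V'` term drops out and `V'' ≤ 0` gives `Im λ ≤ aR V_max`; for `c = 1` the
`V''` term drops out and `|V' Re (u' ū)| ≤ K (|u'|² + a²|u|²) / (2a)` gives the lower bound.
-/

open ComplexConjugate

theorem IntegrableOn.ofReal_mul_of_abs_le {f : ℝ → ℝ} {g : ℝ → ℂ} {a C : ℝ}
    (hf : ContinuousOn f (Ici a)) (hfC : ∀ x, a ≤ x → |f x| ≤ C) (hg : IntegrableOn g (Ioi a)) :
    IntegrableOn (fun x => (f x : ℂ) * g x) (Ioi a) :=
  hg.bdd_mul ((continuous_ofReal.comp_continuousOn (hf.mono Ioi_subset_Ici_self))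
    |>.aestronglyMeasurable measurableSet_Ioi)
    ((ae_restrict_iff' measurableSet_Ioi).2 (ae_of_all _ fun x hx => by
      simpa using hfC x (le_of_lt hx)))

theorem setIntegral_pos_of_continuousOn_of_ne_zero {X : Type*} [TopologicalSpace X]
    [MeasurableSpace X] [OpensMeasurableSpace X] {μ : Measure X} [μ.IsOpenPosMeasure]
    {f : X → ℝ} {s : Set X}
    (hs : IsOpen s) (hf : ContinuousOn f s) (hnn : ∀ x ∈ s, 0 ≤ f x) (hint : IntegrableOn f s μ)
    {x₀ : X} (hx₀ : x₀ ∈ s) (hne : f x₀ ≠ 0) : 0 < ∫ x in s, f x ∂μ := by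
  rw [setIntegral_pos_iff_support_of_nonneg_ae
    ((ae_restrict_iff' hs.measurableSet).2 (ae_of_all _ hnn)) hint]
  exact (hf.isOpen_inter_preimage hs isOpen_ne).measure_pos μ ⟨x₀, hx₀, hne⟩
    |>.trans_le (measure_mono fun x hx => ⟨hx.2, hx.1⟩)

@[simp] theorem Dc_zero (u : ℝ → ℂ) : Dc u 0 = u := iteratedDerivWithin_zero
@[simp] theorem Dr_zero (V : ℝ → ℝ) : Dr V 0 = V := iteratedDerivWithin_zero

theorem integral_Ioi_eq_zero_of_hasDerivAt {E : Type*} [NormedAddCommGroup E] [NormedSpace ℝ E]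
    [CompleteSpace E] {f f' : ℝ → E} {a : ℝ}
    (hcont : ContinuousWithinAt f (Ici a) a) (hderiv : ∀ x ∈ Ioi a, HasDerivAt f (f' x) x)
    (hf : IntegrableOn f (Ioi a)) (hf' : IntegrableOn f' (Ioi a)) (ha : f a = 0) :
    ∫ x in Ioi a, f' x = 0 := by
  rw [integral_Ioi_of_hasDerivAt_of_tendsto hcont hderiv hf'
    (tendsto_zero_of_hasDerivAt_of_integrableOn_Ioi hderiv hf' hf), ha, sub_zero]

theorem MemLp.integrable_mul_conj {α : Type*} [MeasurableSpace α] {μ : Measure α}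
    {f g : α → ℂ} (hf : MemLp f 2 μ) (hg : MemLp g 2 μ) :
    Integrable (fun x => f x * conj (g x)) μ :=
  hf.integrable_mul hg.star

theorem hasDerivAt_iteratedDerivWithin_Ici {E : Type*} [NormedAddCommGroup E] [NormedSpace ℝ E]
    {f : ℝ → E} {a : ℝ} {k n : ℕ} (hf : ContDiffOn ℝ k f (Ici a)) (hn : n < k) {x : ℝ}
    (hx : a < x) :
    HasDerivAt (iteratedDerivWithin n f (Ici a)) (iteratedDerivWithin (n + 1) f (Ici a) x) x := by
  rw [iteratedDerivWithin_succ]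
  exact ((hf.differentiableOn_iteratedDerivWithin (by exact_mod_cast hn) (uniqueDiffOn_Ici a))
    x (le_of_lt hx)).hasDerivWithinAt.hasDerivAt (Ici_mem_nhds hx)

theorem mul_re_mul_conj_le {a k K : ℝ} (ha : 0 < a) (hk : |k| ≤ K) (z w : ℂ) :
    k * (z * conj w).re ≤ K / (2 * a) * (‖z‖ ^ 2 + a ^ 2 * ‖w‖ ^ 2) := by
  have hre : k * (z * conj w).re ≤ K * (‖z‖ * ‖w‖) :=
    calc k * (z * conj w).re ≤ |k| * ‖z * conj w‖ :=
          (le_abs_self _).trans (by rw [abs_mul]; gcongr; exact abs_re_le_norm _)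
      _ ≤ K * (‖z‖ * ‖w‖) := by rw [norm_mul, RCLike.norm_conj]; gcongr
  have hamgm : 2 * a * (‖z‖ * ‖w‖) ≤ ‖z‖ ^ 2 + a ^ 2 * ‖w‖ ^ 2 := by
    nlinarith [sq_nonneg (‖z‖ - a * ‖w‖)]
  rw [div_mul_eq_mul_div, le_div_iff₀ (by positivity)]
  nlinarith [(abs_nonneg k).trans hk]

section OrrSommerfeld

variable (a R c : ℝ) (V : ℝ → ℝ) (u : ℝ → ℂ) (lam : ℂ)

noncomputable def osFlux (x : ℝ) : ℂ :=
  Dc u 3 x * conj (u x) - Dc u 2 x * conj (Dc u 1 x)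
    + (lam - 2 * a ^ 2) * (Dc u 1 x * conj (u x))
    - I * a * R * (V x * (Dc u 1 x * conj (u x)))
    + I * c * a * R * (Dr V 1 x * (u x * conj (u x)))

noncomputable def osFluxDeriv (x : ℝ) : ℂ :=
  Dc u 4 x * conj (u x) - Dc u 2 x * conj (Dc u 2 x)
    + (lam - 2 * a ^ 2) * (Dc u 2 x * conj (u x) + Dc u 1 x * conj (Dc u 1 x))
    - I * a * R * (Dr V 1 x * (Dc u 1 x * conj (u x))
      + V x * (Dc u 2 x * conj (u x) + Dc u 1 x * conj (Dc u 1 x)))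
    + I * c * a * R * (Dr V 2 x * (u x * conj (u x))
      + Dr V 1 x * (Dc u 1 x * conj (u x) + u x * conj (Dc u 1 x)))

noncomputable def energyDensity (x : ℝ) : ℝ := ‖Dc u 1 x‖ ^ 2 + a ^ 2 * ‖u x‖ ^ 2

noncomputable def productionDensity (x : ℝ) : ℝ :=
  V x * energyDensity a u x + (1 - c) * Dr V 2 x * ‖u x‖ ^ 2
    + (1 - 2 * c) * Dr V 1 x * (Dc u 1 x * conj (u x)).re

variable {a R c V u lam}

theorem hasDerivAt_osFlux (hu : ContDiffOn ℝ 4 u (Ici 0)) (hV : ContDiffOn ℝ 2 V (Ici 0))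
    {x : ℝ} (hx : 0 < x) : HasDerivAt (osFlux a R c V u lam) (osFluxDeriv a R c V u lam x) x := by
  have du : ∀ n < 4, HasDerivAt (Dc u n) (Dc u (n + 1) x) x := fun n hn =>
    hasDerivAt_iteratedDerivWithin_Ici hu (by exact_mod_cast hn) hx
  have dV : ∀ n < 2, HasDerivAt (fun y => (Dr V n y : ℂ)) (Dr V (n + 1) x) x := fun n hn =>
    (hasDerivAt_iteratedDerivWithin_Ici hV (by exact_mod_cast hn) hx).ofReal_comp
  have d0 := du 0 (by norm_num)
  have dV0 := dV 0 (by norm_num)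
  simp only [Dc_zero, Dr_zero, zero_add] at d0 dV0
  have d1 := du 1 (by norm_num)
  have hprod := ((((du 3 (by norm_num)).mul d0.star).sub ((du 2 (by norm_num)).mul d1.star)).add
    ((d1.mul d0.star).const_mul (lam - 2 * a ^ 2))).sub
    ((dV0.mul (d1.mul d0.star)).const_mul (I * a * R)) |>.add
    (((dV 1 (by norm_num)).mul (d0.mul d0.star)).const_mul (I * c * a * R))
  refine HasDerivAt.congr_deriv (f := osFlux a R c V u lam) hprod ?_
  simp only [osFluxDeriv, Pi.mul_apply, Complex.star_def]
  ring

theorem continuousOn_osFlux (hu : ContDiffOn ℝ 4 u (Ici 0)) (hV : ContDiffOn ℝ 2 V (Ici 0)) :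
    ContinuousOn (osFlux a R c V u lam) (Ici 0) := by
  have cu : ∀ n ≤ 4, ContinuousOn (Dc u n) (Ici 0) := fun n hn =>
    hu.continuousOn_iteratedDerivWithin (by exact_mod_cast hn) (uniqueDiffOn_Ici 0)
  have c1 := cu 1 (by norm_num)
  have c2 := cu 2 (by norm_num)
  have c3 := cu 3 (by norm_num)
  have c0 := hu.continuousOn
  have cV := hV.continuousOn
  have cV1 : ContinuousOn (Dr V 1) (Ici 0) :=
    hV.continuousOn_iteratedDerivWithin (by norm_num) (uniqueDiffOn_Ici 0)
  unfold osFlux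
  fun_prop

theorem osFlux_zero (hu0 : u 0 = 0) (hu1 : Dc u 1 0 = 0) : osFlux a R c V u lam 0 = 0 := by
  simp [osFlux, hu0, hu1]

variable {C K : ℝ}

theorem integrableOn_osFlux (hl2 : ∀ n ≤ 4, L2 (Dc u n)) (hV : ContDiffOn ℝ 2 V (Ici 0))
    (hVC : ∀ x, 0 ≤ x → |V x| ≤ C) (hV'K : ∀ x, 0 ≤ x → |Dr V 1 x| ≤ K) :
    IntegrableOn (osFlux a R c V u lam) (Ioi 0) := by
  have P {f g : ℝ → ℂ} (hf : L2 f) (hg : L2 g) :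
      IntegrableOn (fun x => f x * conj (g x)) (Ioi 0) := MemLp.integrable_mul_conj hf hg
  have l0 : L2 u := by simpa using hl2 0 (by norm_num)
  have bV {g : ℝ → ℂ} (hg : IntegrableOn g (Ioi 0)) :
      IntegrableOn (fun x => (V x : ℂ) * g x) (Ioi 0) :=
    IntegrableOn.ofReal_mul_of_abs_le hV.continuousOn hVC hg
  have bV1 {g : ℝ → ℂ} (hg : IntegrableOn g (Ioi 0)) :
      IntegrableOn (fun x => (Dr V 1 x : ℂ) * g x) (Ioi 0) :=
    IntegrableOn.ofReal_mul_of_abs_le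
      (hV.continuousOn_iteratedDerivWithin (by norm_num) (uniqueDiffOn_Ici 0)) hV'K hg
  exact ((((P (hl2 3 (by norm_num)) l0).sub (P (hl2 2 (by norm_num)) (hl2 1 (by norm_num)))).add
    ((P (hl2 1 (by norm_num)) l0).const_mul _)).sub
    ((bV (P (hl2 1 (by norm_num)) l0)).const_mul _)).add ((bV1 (P l0 l0)).const_mul _)

theorem integrableOn_osFluxDeriv (hl2 : ∀ n ≤ 4, L2 (Dc u n)) (hV : ContDiffOn ℝ 2 V (Ici 0))
    (hVC : ∀ x, 0 ≤ x → |V x| ≤ C) (hV'K : ∀ x, 0 ≤ x → |Dr V 1 x| ≤ K)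
    (hV''u : IntegrableOn (fun x => (Dr V 2 x : ℂ) * (u x * conj (u x))) (Ioi 0)) :
    IntegrableOn (osFluxDeriv a R c V u lam) (Ioi 0) := by
  have P {f g : ℝ → ℂ} (hf : L2 f) (hg : L2 g) :
      IntegrableOn (fun x => f x * conj (g x)) (Ioi 0) := MemLp.integrable_mul_conj hf hg
  have l0 : L2 u := by simpa using hl2 0 (by norm_num)
  have bV {g : ℝ → ℂ} (hg : IntegrableOn g (Ioi 0)) :
      IntegrableOn (fun x => (V x : ℂ) * g x) (Ioi 0) :=
    IntegrableOn.ofReal_mul_of_abs_le hV.continuousOn hVC hg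
  have bV1 {g : ℝ → ℂ} (hg : IntegrableOn g (Ioi 0)) :
      IntegrableOn (fun x => (Dr V 1 x : ℂ) * g x) (Ioi 0) :=
    IntegrableOn.ofReal_mul_of_abs_le
      (hV.continuousOn_iteratedDerivWithin (by norm_num) (uniqueDiffOn_Ici 0)) hV'K hg
  have l1 := hl2 1 (by norm_num)
  have l2 := hl2 2 (by norm_num)
  exact ((((P (hl2 4 le_rfl) l0).sub (P l2 l2)).add (((P l2 l0).add (P l1 l1)).const_mul _)).sub
    (((bV1 (P l1 l0)).add (bV ((P l2 l0).add (P l1 l1)))).const_mul _)).add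
    ((hV''u.add (bV1 ((P l1 l0).add (P l0 l1)))).const_mul _)

theorem IsOSEigenpair.integrableOn_Dr_two_mul_mul_conj (hu : IsOSEigenpair a R V u lam)
    (ha : a ≠ 0) (hR : R ≠ 0) (hV : ContinuousOn V (Ici 0)) (hVC : ∀ x, 0 ≤ x → |V x| ≤ C) :
    IntegrableOn (fun x => (Dr V 2 x : ℂ) * (u x * conj (u x))) (Ioi 0) := by
  obtain ⟨-, hl2, -, -, -, heq⟩ := hu
  have P {f g : ℝ → ℂ} (hf : L2 f) (hg : L2 g) :
      IntegrableOn (fun x => f x * conj (g x)) (Ioi 0) := MemLp.integrable_mul_conj hf hg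
  have l0 : L2 u := by simpa using hl2 0 (by norm_num)
  have hA : IntegrableOn (fun x => -(Dc u 2 x * conj (u x)) + a ^ 2 * (u x * conj (u x)))
      (Ioi 0) := (P (hl2 2 (by norm_num)) l0).neg.add ((P l0 l0).const_mul _)
  have hB : IntegrableOn (fun x => Dc u 4 x * conj (u x) - 2 * a ^ 2 * (Dc u 2 x * conj (u x))
      + a ^ 4 * (u x * conj (u x))) (Ioi 0) :=
    ((P (hl2 4 le_rfl) l0).sub ((P (hl2 2 (by norm_num)) l0).const_mul _)).add
      ((P l0 l0).const_mul _)
  have hk : I * a * R ≠ 0 := by simp [ha, hR]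
  refine IntegrableOn.congr_fun (((hA.const_mul lam).sub hB).const_mul (I * a * R)⁻¹ |>.sub
    (IntegrableOn.ofReal_mul_of_abs_le hV hVC hA)) (fun x hx => ?_) measurableSet_Ioi
  dsimp only [Pi.sub_apply]
  linear_combination (-(I * a * R)⁻¹ * conj (u x)) * heq x (le_of_lt hx)
    + (V x * (-(Dc u 2 x * conj (u x)) + a ^ 2 * (u x * conj (u x)))
      + Dr V 2 x * (u x * conj (u x))) * inv_mul_cancel₀ hk

theorem IsOSEigenpair.im_osFluxDeriv (hu : IsOSEigenpair a R V u lam) {x : ℝ} (hx : 0 ≤ x) :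
    (osFluxDeriv a R c V u lam x).im
      = lam.im * energyDensity a u x - a * R * productionDensity a c V u x := by
  obtain ⟨-, -, -, -, -, heq⟩ := hu
  specialize heq x hx
  set u0 := u x
  set u1 := Dc u 1 x
  set u2 := Dc u 2 x
  have key : osFluxDeriv a R c V u lam x
      = lam * (u1 * conj u1 + a ^ 2 * (u0 * conj u0))
        - (u2 * conj u2 + 2 * a ^ 2 * (u1 * conj u1) + a ^ 4 * (u0 * conj u0))
        - I * a * R * (V x * (u1 * conj u1 + a ^ 2 * (u0 * conj u0)) + Dr V 2 x * (u0 * conj u0)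
          + Dr V 1 x * (u1 * conj u0))
        + I * c * a * R * (Dr V 2 x * (u0 * conj u0)
          + Dr V 1 x * (u1 * conj u0 + conj (u1 * conj u0))) := by
    simp only [osFluxDeriv, map_mul, conj_conj]
    linear_combination conj u0 * heq
  rw [key]
  simp only [mul_conj', energyDensity, productionDensity]
  simp [Complex.mul_im, Complex.mul_re, ← Complex.ofReal_pow]
  ring

theorem IsOSEigenpair.integral_osFluxDeriv_eq_zero (hu : IsOSEigenpair a R V u lam)
    (hV : ContDiffOn ℝ 2 V (Ici 0)) (hVC : ∀ x, 0 ≤ x → |V x| ≤ C)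
    (hV'K : ∀ x, 0 ≤ x → |Dr V 1 x| ≤ K) (ha : a ≠ 0) (hR : R ≠ 0) :
    ∫ x in Ioi 0, osFluxDeriv a R c V u lam x = 0 := by
  have hV''u := hu.integrableOn_Dr_two_mul_mul_conj ha hR hV.continuousOn hVC
  obtain ⟨hreg, hl2, -, hu0, hu1, -⟩ := hu
  exact integral_Ioi_eq_zero_of_hasDerivAt
    ((continuousOn_osFlux hreg hV).continuousWithinAt self_mem_Ici)
    (fun _ hx => hasDerivAt_osFlux hreg hV hx) (integrableOn_osFlux hl2 hV hVC hV'K)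
    (integrableOn_osFluxDeriv hl2 hV hVC hV'K hV''u) (osFlux_zero hu0 hu1)

variable (a) in
theorem integrableOn_energyDensity (hl2 : ∀ n ≤ 4, L2 (Dc u n)) :
    IntegrableOn (energyDensity a u) (Ioi 0) := by
  have sq {f : ℝ → ℂ} (hf : L2 f) : IntegrableOn (fun x => ‖f x‖ ^ 2) (Ioi 0) :=
    (memLp_two_iff_integrable_sq_norm hf.1).1 hf
  exact (sq (hl2 1 (by norm_num))).add ((sq (by simpa using hl2 0 (by norm_num))).const_mul _)

theorem IsOSEigenpair.integrableOn_productionDensity (hu : IsOSEigenpair a R V u lam)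
    (hV : ContDiffOn ℝ 2 V (Ici 0)) (hVC : ∀ x, 0 ≤ x → |V x| ≤ C)
    (hV'K : ∀ x, 0 ≤ x → |Dr V 1 x| ≤ K) (ha : a ≠ 0) (hR : R ≠ 0) (c : ℝ) :
    IntegrableOn (productionDensity a c V u) (Ioi 0) := by
  have hF' : IntegrableOn (osFluxDeriv a R c V u lam) (Ioi 0) :=
    integrableOn_osFluxDeriv hu.2.1 hV hVC hV'K
      (hu.integrableOn_Dr_two_mul_mul_conj ha hR hV.continuousOn hVC)
  refine IntegrableOn.congr_fun ((((integrableOn_energyDensity a hu.2.1).const_mul lam.im).sub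
    hF'.im).const_mul (a * R)⁻¹) (fun x hx => ?_) measurableSet_Ioi
  change (a * R)⁻¹ * (lam.im * energyDensity a u x - (osFluxDeriv a R c V u lam x).im) = _
  rw [hu.im_osFluxDeriv hx.le]
  field_simp
  ring

theorem IsOSEigenpair.im_mul_integral_energyDensity (hu : IsOSEigenpair a R V u lam)
    (hV : ContDiffOn ℝ 2 V (Ici 0)) (hVC : ∀ x, 0 ≤ x → |V x| ≤ C)
    (hV'K : ∀ x, 0 ≤ x → |Dr V 1 x| ≤ K) (ha : a ≠ 0) (hR : R ≠ 0) (c : ℝ) :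
    lam.im * ∫ x in Ioi 0, energyDensity a u x
      = a * R * ∫ x in Ioi 0, productionDensity a c V u x := by
  have hF' : IntegrableOn (osFluxDeriv a R c V u lam) (Ioi 0) :=
    integrableOn_osFluxDeriv hu.2.1 hV hVC hV'K
      (hu.integrableOn_Dr_two_mul_mul_conj ha hR hV.continuousOn hVC)
  have him : ∫ x in Ioi 0, (osFluxDeriv a R c V u lam x).im = 0 := by
    have := integral_im hF'
    rw [hu.integral_osFluxDeriv_eq_zero hV hVC hV'K ha hR] at this
    simpa using this
  rw [setIntegral_congr_fun measurableSet_Ioi fun x hx => hu.im_osFluxDeriv hx.le,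
    integral_sub ((integrableOn_energyDensity a hu.2.1).const_mul _)
      ((hu.integrableOn_productionDensity hV hVC hV'K ha hR c).const_mul _),
    integral_const_mul, integral_const_mul] at him
  linarith

theorem IsOSEigenpair.integral_energyDensity_pos (hu : IsOSEigenpair a R V u lam) (ha : a ≠ 0) :
    0 < ∫ x in Ioi 0, energyDensity a u x := by
  obtain ⟨hreg, hl2, ⟨x₀, hx₀, hux₀⟩, hu0, -, -⟩ := hu
  have c1 : ContinuousOn (Dc u 1) (Ioi 0) :=
    (hreg.continuousOn_iteratedDerivWithin (by norm_num) (uniqueDiffOn_Ici 0)).mono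
      Ioi_subset_Ici_self
  have c0 : ContinuousOn u (Ioi 0) := hreg.continuousOn.mono Ioi_subset_Ici_self
  refine setIntegral_pos_of_continuousOn_of_ne_zero isOpen_Ioi
    (by unfold energyDensity; fun_prop) (fun x _ => by unfold energyDensity; positivity)
    (integrableOn_energyDensity a hl2)
    (hx₀.lt_of_ne (by rintro rfl; exact hux₀ hu0)) (ne_of_gt ?_)
  unfold energyDensity
  positivity

theorem IsOSEigenpair.im_le {M : ℝ} (hu : IsOSEigenpair a R V u lam)
    (hV : ContDiffOn ℝ 2 V (Ici 0)) (hVC : ∀ x, 0 ≤ x → |V x| ≤ C)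
    (hV'K : ∀ x, 0 ≤ x → |Dr V 1 x| ≤ K) (ha : 0 < a) (hR : 0 < R)
    (hVM : ∀ x, 0 ≤ x → V x ≤ M) (hV'' : ∀ x, 0 ≤ x → Dr V 2 x ≤ 0) :
    lam.im ≤ a * R * M := by
  have hP : ∫ x in Ioi 0, productionDensity a (1 / 2) V u x
      ≤ M * ∫ x in Ioi 0, energyDensity a u x := by
    rw [← integral_const_mul]
    refine setIntegral_mono_on (hu.integrableOn_productionDensity hV hVC hV'K ha.ne' hR.ne' _)
      ((integrableOn_energyDensity a hu.2.1).const_mul M) measurableSet_Ioi fun x hx => ?_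
    have hw : 0 ≤ energyDensity a u x := by unfold energyDensity; positivity
    have hVw := mul_le_mul_of_nonneg_right (hVM x hx.le) hw
    have hV''u := mul_nonpos_of_nonpos_of_nonneg (hV'' x hx.le) (sq_nonneg ‖u x‖)
    simp only [productionDensity]
    nlinarith
  refine le_of_mul_le_mul_right ?_ (hu.integral_energyDensity_pos ha.ne')
  calc lam.im * ∫ x in Ioi 0, energyDensity a u x
      = a * R * ∫ x in Ioi 0, productionDensity a (1 / 2) V u x :=
        hu.im_mul_integral_energyDensity hV hVC hV'K ha.ne' hR.ne' _
    _ ≤ a * R * (M * ∫ x in Ioi 0, energyDensity a u x) := by gcongr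
    _ = a * R * M * ∫ x in Ioi 0, energyDensity a u x := by ring

theorem IsOSEigenpair.le_im {m : ℝ} (hu : IsOSEigenpair a R V u lam)
    (hV : ContDiffOn ℝ 2 V (Ici 0)) (hVC : ∀ x, 0 ≤ x → |V x| ≤ C)
    (hV'K : ∀ x, 0 ≤ x → |Dr V 1 x| ≤ K) (ha : 0 < a) (hR : 0 < R)
    (hmV : ∀ x, 0 ≤ x → m ≤ V x) :
    a * R * m - R / 2 * K ≤ lam.im := by
  have hP : (m - K / (2 * a)) * ∫ x in Ioi 0, energyDensity a u x
      ≤ ∫ x in Ioi 0, productionDensity a 1 V u x := by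
    rw [← integral_const_mul]
    refine setIntegral_mono_on ((integrableOn_energyDensity a hu.2.1).const_mul _)
      (hu.integrableOn_productionDensity hV hVC hV'K ha.ne' hR.ne' _) measurableSet_Ioi
      fun x hx => ?_
    have hw : 0 ≤ energyDensity a u x := by unfold energyDensity; positivity
    have hVw := mul_le_mul_of_nonneg_right (hmV x hx.le) hw
    have hV'u := mul_re_mul_conj_le ha (hV'K x hx.le) (Dc u 1 x) (u x)
    simp only [productionDensity, energyDensity] at hVw hV'u ⊢
    nlinarith
  refine le_of_mul_le_mul_right ?_ (hu.integral_energyDensity_pos ha.ne')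
  calc (a * R * m - R / 2 * K) * ∫ x in Ioi 0, energyDensity a u x
      = a * R * ((m - K / (2 * a)) * ∫ x in Ioi 0, energyDensity a u x) := by
        field_simp
    _ ≤ a * R * ∫ x in Ioi 0, productionDensity a 1 V u x := by gcongr
    _ = lam.im * ∫ x in Ioi 0, energyDensity a u x :=
        (hu.im_mul_integral_energyDensity hV hVC hV'K ha.ne' hR.ne' _).symm

end OrrSommerfeld

/-- If `V'' ≤ 0` on `[0, ∞)`, then for every Orr–Sommerfeld eigenvalue `λ` one has
`aRV_min − (R/2)K ≤ Im λ ≤ aRV_max`; in particular `Im λ ≤ aR` if moreover `V ≤ 1`. -/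
theorem os_eigenvalue_im_bounds_concave_profile
    (a R : ℝ) (ha : 0 < a) (hR : 0 < R)
    (V : ℝ → ℝ) (hV : ContDiffOn ℝ 2 V (Set.Ici 0))
    (Vmin Vmax K : ℝ)
    (hVbd : ∀ x : ℝ, 0 ≤ x → Vmin ≤ V x ∧ V x ≤ Vmax)
    (hV'bd : ∀ x : ℝ, 0 ≤ x → |Dr V 1 x| ≤ K)
    (hV'' : ∀ x : ℝ, 0 ≤ x → Dr V 2 x ≤ 0)
    (u : ℝ → ℂ) (lam : ℂ) (hu : IsOSEigenpair a R V u lam) :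
    (a * R * Vmin - R / 2 * K ≤ lam.im ∧ lam.im ≤ a * R * Vmax) ∧
    ((∀ x : ℝ, 0 ≤ x → V x ≤ 1) → lam.im ≤ a * R) := by
  have hVC (x : ℝ) (hx : 0 ≤ x) : |V x| ≤ max |Vmin| |Vmax| :=
    abs_le_max_abs_abs (hVbd x hx).1 (hVbd x hx).2
  have hupper {M : ℝ} (hVM : ∀ x, 0 ≤ x → V x ≤ M) : lam.im ≤ a * R * M :=
    hu.im_le hV hVC hV'bd ha hR hVM hV''
  refine ⟨⟨hu.le_im hV hVC hV'bd ha hR fun x hx => (hVbd x hx).1,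
    hupper fun x hx => (hVbd x hx).2⟩, fun hV1 => ?_⟩
  simpa using hupper hV1
end

section
/- Let a > 0, let K ≥ 0, and let V : [0,∞) → ℝ be twice continuously differentiable with V'' ≤ 0 on [0,∞), bounded, with |V'| ≤ K. Let u : [0,∞) → ℂ be continuously differentiable, not identically zero, with u, u' in L²(0,∞) and u(0) = 0, and set β₃ := (∫₀^∞ V'(x) u(x) conj(u'(x)) dx) / (∫₀^∞ (|u'(x)|² + a²|u(x)|²) dx). Then Re β₃ ≥ 0 and |β₃| ≤ K/(2a); i.e., β₃ lies in the set (K/(2a))·{ z ∈ ℂ : |z| ≤ 1, Re z ≥ 0 }. -/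
open MeasureTheory Set Complex

/-!
Writing `g = ‖u‖²`, one has `Re (V' u conj u') = V' g' / 2`. Integration by parts on `[0, R]`
gives `∫₀ᴿ V' g' = V'(R) g(R) - ∫₀ᴿ V'' g ≥ V'(R) g(R)` because `g(0) = 0` and `V'' ≤ 0`; the
boundary term tends to `0` since `V'` is bounded and `g → 0` (both `g` and `g'` are integrable),
so `Re β₃ ≥ 0`. The modulus bound is the pointwise AM–GM inequality
`2a‖u‖‖u'‖ ≤ ‖u'‖² + a²‖u‖²`.
-/

open Filter Topology ComplexConjugate
open scoped InnerProductSpace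

theorem hasDerivAt_iteratedDerivWithin_of_mem_nhds {E : Type*} [NormedAddCommGroup E]
    [NormedSpace ℝ E] {f : ℝ → E} {s : Set ℝ} {m : WithTop ℕ∞} {n : ℕ} {x : ℝ}
    (hf : ContDiffOn ℝ m f s) (hn : (n : WithTop ℕ∞) < m) (hs : UniqueDiffOn ℝ s)
    (hx : s ∈ 𝓝 x) :
    HasDerivAt (iteratedDerivWithin n f s) (iteratedDerivWithin (n + 1) f s x) x := by
  rw [iteratedDerivWithin_succ, derivWithin_of_mem_nhds hx]
  exact ((hf.differentiableOn_iteratedDerivWithin hn hs).differentiableAt hx).hasDerivAt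

theorem norm_ofReal_mul_mul_conj_le {a K c : ℝ} (ha : 0 < a) (hc : |c| ≤ K) (z w : ℂ) :
    ‖(c : ℂ) * z * conj w‖ ≤ K / (2 * a) * (‖w‖ ^ 2 + a ^ 2 * ‖z‖ ^ 2) := by
  rw [norm_mul, norm_mul, Complex.norm_real, Complex.norm_conj, Real.norm_eq_abs,
    div_mul_eq_mul_div, le_div_iff₀ (by positivity)]
  have hK : 0 ≤ K := (abs_nonneg c).trans hc
  nlinarith [mul_nonneg hK (sq_nonneg (‖w‖ - a * ‖z‖)),
    mul_le_mul_of_nonneg_right hc (mul_nonneg (norm_nonneg z) (norm_nonneg w))]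

theorem norm_integral_ofReal_mul_mul_conj_le {α : Type*} [MeasurableSpace α] {μ : Measure α}
    {f : α → ℝ} {u u' : α → ℂ} {a K : ℝ} (ha : 0 < a) (hf : ∀ᵐ x ∂μ, |f x| ≤ K)
    (hu : MemLp u 2 μ) (hu' : MemLp u' 2 μ) :
    ‖∫ x, (f x : ℂ) * u x * conj (u' x) ∂μ‖ ≤
      K / (2 * a) * ∫ x, (‖u' x‖ ^ 2 + a ^ 2 * ‖u x‖ ^ 2) ∂μ := by
  rw [← integral_const_mul]
  refine norm_integral_le_of_norm_le (((hu'.integrable_norm_pow two_ne_zero).add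
    ((hu.integrable_norm_pow two_ne_zero).const_mul _)).const_mul _) ?_
  filter_upwards [hf] with x hx using norm_ofReal_mul_mul_conj_le ha hx _ _

theorem integral_Ioi_mul_deriv_nonneg_of_deriv_nonpos {f f' g g' : ℝ → ℝ}
    (hf : ContinuousOn f (Ici 0)) (hff' : ∀ x ∈ Ioi 0, HasDerivAt f (f' x) x)
    (hf' : ContinuousOn f' (Ici 0)) (hf'_nonpos : ∀ x ∈ Ici 0, f' x ≤ 0)
    (hg : ContinuousOn g (Ici 0)) (hgg' : ∀ x ∈ Ioi 0, HasDerivAt g (g' x) x)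
    (hg' : IntegrableOn g' (Ioi 0)) (hg_nonneg : ∀ x ∈ Ici 0, 0 ≤ g x) (hg0 : g 0 = 0)
    (hfg : Tendsto (fun x => f x * g x) atTop (𝓝 0))
    (hfg' : IntegrableOn (fun x => f x * g' x) (Ioi 0)) :
    0 ≤ ∫ x in Ioi 0, f x * g' x := by
  have hlower : ∀ R ≥ (0 : ℝ), f R * g R ≤ ∫ x in 0..R, f x * g' x := by
    intro R hR
    have hIcc : uIcc 0 R ⊆ Ici (0 : ℝ) := by rw [uIcc_of_le hR]; exact Icc_subset_Ici_self
    have hIoo : ∀ x ∈ Ioo (min 0 R) (max 0 R), x ∈ Ioi 0 := fun x hx =>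
      (min_eq_left hR).symm.trans_lt hx.1
    rw [intervalIntegral.integral_mul_deriv_eq_deriv_mul_of_hasDerivAt (hf.mono hIcc)
      (hg.mono hIcc) (fun x hx => hff' x (hIoo x hx)) (fun x hx => hgg' x (hIoo x hx))
      ((hf'.mono hIcc).intervalIntegrable)
      ((intervalIntegrable_iff_integrableOn_Ioc_of_le hR).2 (hg'.mono_set Ioc_subset_Ioi_self)),
      hg0, mul_zero, sub_zero, le_sub_self_iff, ← neg_nonneg, ← intervalIntegral.integral_neg]
    exact intervalIntegral.integral_nonneg hR fun x hx =>
      neg_nonneg.2 (mul_nonpos_of_nonpos_of_nonneg (hf'_nonpos x hx.1) (hg_nonneg x hx.1))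
  exact le_of_tendsto_of_tendsto hfg (intervalIntegral_tendsto_integral_Ioi 0 hfg' tendsto_id)
    (eventually_ge_atTop 0 |>.mono hlower)

theorem re_integral_Ioi_ofReal_mul_mul_conj_deriv_nonneg {f f' : ℝ → ℝ} {u u' : ℝ → ℂ} {K : ℝ}
    (hf : ContinuousOn f (Ici 0)) (hff' : ∀ x ∈ Ioi 0, HasDerivAt f (f' x) x)
    (hf' : ContinuousOn f' (Ici 0)) (hf'_nonpos : ∀ x ∈ Ici 0, f' x ≤ 0)
    (hf_bdd : ∀ x ∈ Ici 0, |f x| ≤ K)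
    (hu : ContinuousOn u (Ici 0)) (huu' : ∀ x ∈ Ioi 0, HasDerivAt u (u' x) x) (hu0 : u 0 = 0)
    (hu2 : MemLp u 2 (volume.restrict (Ioi 0))) (hu'2 : MemLp u' 2 (volume.restrict (Ioi 0))) :
    0 ≤ (∫ x in Ioi 0, (f x : ℂ) * u x * conj (u' x)).re := by
  have hre : ∀ x, ((f x : ℂ) * u x * conj (u' x)).re = f x * ⟪u x, u' x⟫_ℝ := fun x => by
    rw [mul_assoc, Complex.re_ofReal_mul, ← Complex.inner, real_inner_comm]
  have hint : IntegrableOn (fun x => (f x : ℂ) * u x * conj (u' x)) (Ioi 0) := by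
    simp_rw [mul_assoc]
    refine (hu2.integrable_mul hu'2.star).bdd_mul (c := K)
      (Complex.continuous_ofReal.comp_aestronglyMeasurable
        ((hf.mono Ioi_subset_Ici_self).aestronglyMeasurable measurableSet_Ioi)) ?_
    filter_upwards [ae_restrict_mem measurableSet_Ioi] with x hx
    simpa using hf_bdd x (Ioi_subset_Ici_self hx)
  have hg'_int : IntegrableOn (fun x => 2 * ⟪u x, u' x⟫_ℝ) (Ioi 0) :=
    ((hu'2.integrable_mul hu2.star).re.congr
      (ae_of_all _ fun x => (Complex.inner (u x) (u' x)).symm)).const_mul 2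
  have hgg' : ∀ x ∈ Ioi 0, HasDerivAt (fun y => ‖u y‖ ^ 2) (2 * ⟪u x, u' x⟫_ℝ) x :=
    fun x hx => (huu' x hx).norm_sq
  have hg_lim : Tendsto (fun y => ‖u y‖ ^ 2) atTop (𝓝 0) :=
    tendsto_zero_of_hasDerivAt_of_integrableOn_Ioi hgg' hg'_int
      (hu2.integrable_norm_pow two_ne_zero)
  have hf_bdd' : IsBoundedUnder (· ≤ ·) atTop (norm ∘ f) :=
    isBoundedUnder_of_eventually_le (a := K) (eventually_ge_atTop 0 |>.mono hf_bdd)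
  have hfg'_int : IntegrableOn (fun x => f x * (2 * ⟪u x, u' x⟫_ℝ)) (Ioi 0) :=
    (hint.re.const_mul 2).congr (ae_of_all _ fun x => by
      simp only [RCLike.re_to_complex, hre]; ring)
  have hIBP := integral_Ioi_mul_deriv_nonneg_of_deriv_nonpos hf hff' hf' hf'_nonpos
    (hu.norm.pow 2) hgg' hg'_int (fun x _ => sq_nonneg _) (by simp [hu0])
    (isBoundedUnder_le_mul_tendsto_zero hf_bdd' hg_lim) hfg'_int
  simp_rw [mul_left_comm _ (2 : ℝ), integral_const_mul] at hIBP
  rw [← RCLike.re_to_complex, ← integral_re hint]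
  simpa only [RCLike.re_to_complex, hre] using nonneg_of_mul_nonneg_right hIBP two_pos

theorem os_beta3_enclosure_general
    (a K : ℝ) (ha : 0 < a)
    (V : ℝ → ℝ) (hV : ContDiffOn ℝ 2 V (Set.Ici 0))
    (hV'' : ∀ x : ℝ, 0 ≤ x → Dr V 2 x ≤ 0)
    (hV' : ∀ x : ℝ, 0 ≤ x → |Dr V 1 x| ≤ K)
    (u : ℝ → ℂ) (hu : ContDiffOn ℝ 1 u (Set.Ici 0))
    (huL2 : L2 u) (hu'L2 : L2 (Dc u 1)) (hu0 : u 0 = 0) :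
    0 ≤ ((∫ x in Set.Ioi (0:ℝ), (Dr V 1 x : ℂ) * u x * (starRingEnd ℂ) (Dc u 1 x))
          / ((∫ x in Set.Ioi (0:ℝ), (‖Dc u 1 x‖^2 + a^2 * ‖u x‖^2) : ℝ) : ℂ)).re ∧
    ‖(∫ x in Set.Ioi (0:ℝ), (Dr V 1 x : ℂ) * u x * (starRingEnd ℂ) (Dc u 1 x))
          / ((∫ x in Set.Ioi (0:ℝ), (‖Dc u 1 x‖^2 + a^2 * ‖u x‖^2) : ℝ) : ℂ)‖
        ≤ K / (2 * a) := by
  have hK : 0 ≤ K := (abs_nonneg _).trans (hV' 0 le_rfl)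
  have hu_deriv : ∀ x ∈ Ioi 0, HasDerivAt u (Dc u 1 x) x := fun x hx => by
    have h := hasDerivAt_iteratedDerivWithin_of_mem_nhds (n := 0) hu (by norm_num)
      (uniqueDiffOn_Ici 0) (Ici_mem_nhds hx)
    rwa [iteratedDerivWithin_zero] at h
  have hV'_deriv : ∀ x ∈ Ioi 0, HasDerivAt (Dr V 1) (Dr V 2 x) x := fun x hx =>
    hasDerivAt_iteratedDerivWithin_of_mem_nhds (n := 1) hV (by norm_num) (uniqueDiffOn_Ici 0)
      (Ici_mem_nhds hx)
  have hre := re_integral_Ioi_ofReal_mul_mul_conj_deriv_nonneg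
    (hV.continuousOn_iteratedDerivWithin (by norm_num) (uniqueDiffOn_Ici 0)) hV'_deriv
    (hV.continuousOn_iteratedDerivWithin le_rfl (uniqueDiffOn_Ici 0)) hV'' hV'
    hu.continuousOn hu_deriv hu0 huL2 hu'L2
  have hnorm := norm_integral_ofReal_mul_mul_conj_le ha
    ((ae_restrict_mem measurableSet_Ioi).mono fun x hx => hV' x (le_of_lt hx)) huL2 hu'L2
  have hN : 0 ≤ ∫ x in Ioi (0 : ℝ), (‖Dc u 1 x‖ ^ 2 + a ^ 2 * ‖u x‖ ^ 2) :=
    setIntegral_nonneg measurableSet_Ioi fun x _ => by positivity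
  refine ⟨?_, ?_⟩
  · rw [Complex.div_ofReal_re]
    exact div_nonneg hre hN
  · rw [norm_div, Complex.norm_real, Real.norm_of_nonneg hN]
    exact div_le_of_le_mul₀ hN (by positivity) hnorm

/-- If `V'' ≤ 0` and `|V'| ≤ K`, the quotient
`β₃ = ⟨V'u, u'⟩ / (‖u'‖² + a²‖u‖²)` satisfies `Re β₃ ≥ 0` and `|β₃| ≤ K/(2a)`, i.e.
`β₃ ∈ (K/(2a))·{z : |z| ≤ 1, Re z ≥ 0}`. -/
theorem os_beta3_enclosure
    (a K : ℝ) (ha : 0 < a) (hK : 0 ≤ K)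
    (V : ℝ → ℝ) (hV : ContDiffOn ℝ 2 V (Set.Ici 0))
    (hVbd : ∃ C : ℝ, ∀ x : ℝ, 0 ≤ x → |V x| ≤ C ∧ |Dr V 2 x| ≤ C)
    (hV'' : ∀ x : ℝ, 0 ≤ x → Dr V 2 x ≤ 0)
    (hV' : ∀ x : ℝ, 0 ≤ x → |Dr V 1 x| ≤ K)
    (u : ℝ → ℂ) (hu : ContDiffOn ℝ 1 u (Set.Ici 0))
    (hune : ∃ x : ℝ, 0 ≤ x ∧ u x ≠ 0)
    (huL2 : L2 u) (hu'L2 : L2 (Dc u 1)) (hu0 : u 0 = 0) :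
    0 ≤ ((∫ x in Set.Ioi (0:ℝ), (Dr V 1 x : ℂ) * u x * (starRingEnd ℂ) (Dc u 1 x))
          / ((∫ x in Set.Ioi (0:ℝ), (‖Dc u 1 x‖^2 + a^2 * ‖u x‖^2) : ℝ) : ℂ)).re ∧
    ‖(∫ x in Set.Ioi (0:ℝ), (Dr V 1 x : ℂ) * u x * (starRingEnd ℂ) (Dc u 1 x))
          / ((∫ x in Set.Ioi (0:ℝ), (‖Dc u 1 x‖^2 + a^2 * ‖u x‖^2) : ℝ) : ℂ)‖
        ≤ K / (2 * a) :=
  os_beta3_enclosure_general a K ha V hV hV'' hV' u hu huL2 hu'L2 hu0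
end

section
/- Let a > 0 and let μ ∈ ℂ with μ ∉ [0,∞). Then there exists a unique function w : [0,∞) → ℂ, twice continuously differentiable, with w, w', w'' in L²(0,∞), satisfying w(0) = 0 and −w''(x) − μ·w(x) = e^{−ax} for all x ≥ 0; and this w satisfies w'(0) ≠ 0. -/
/-!
Choose `k` with `k² = -μ` and `Re k > 0`; this is where `μ ∉ [0, ∞)` enters. The solution is
explicit: `w = (e^{-kx} - e^{-ax}) / (a² + μ)` with `w'(0) = (a - k) / (a² + μ) ≠ 0`, because
`a² + μ = (a - k)(a + k)`; at resonance `a² + μ = 0` it is `w = x e^{-ax} / (2a)`. The difference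
`v` of two solutions satisfies `v'' = k² v`, `v(0) = 0` and `v, v' ∈ L²`. Then `u = v' + k v`
solves `u' = k u`, so it is a multiple of `e^{kx}` lying in L², hence zero; and `v' = -k v` gives
`v = v(0) e^{-kx} = 0`.
-/

open MeasureTheory Set Complex

/-- `w` solves `−w'' − μw = e^{−ax}` on `[0, ∞)` with `w(0) = 0`, `w, w', w'' ∈ L²`. -/
def IsResolventSolution (a : ℝ) (μ : ℂ) (w : ℝ → ℂ) : Prop :=
  ContDiffOn ℝ 2 w (Set.Ici 0) ∧ L2 w ∧ L2 (Dc w 1) ∧ L2 (Dc w 2) ∧ w 0 = 0 ∧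
  ∀ x : ℝ, 0 ≤ x → -(Dc w 2 x) - μ * w x = ((Real.exp (-(a * x)) : ℝ) : ℂ)

lemma L2.congr {f g : ℝ → ℂ} (hf : L2 f) (h : ∀ x, 0 ≤ x → f x = g x) : L2 g :=
  hf.ae_eq ((ae_restrict_mem measurableSet_Ioi).mono fun x hx => h x hx.le)

lemma L2_pow_mul_cexp (n : ℕ) {c : ℂ} (hc : c.re < 0) :
    L2 fun x : ℝ => (x : ℂ) ^ n * cexp (c * x) := by
  rw [L2, memLp_two_iff_integrable_sq_norm (by fun_prop)]
  have h := integrableOn_rpow_mul_exp_neg_mul_rpow (s := 2 * n) (p := 1) (b := -2 * c.re)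
    (by linarith [n.cast_nonneg (α := ℝ)]) one_pos (by linarith)
  refine h.congr_fun (fun x (hx : 0 < x) => ?_) measurableSet_Ioi
  have hre : (c * x).re = c.re * x := by simp
  rw [norm_mul, norm_pow, Complex.norm_exp, Complex.norm_real, Real.norm_of_nonneg hx.le,
    mul_pow, ← pow_mul, ← Real.exp_nat_mul, hre, show (2 : ℝ) * n = (2 * n : ℕ) by push_cast; rfl]
  simp only [Real.rpow_one, Real.rpow_natCast]
  ring_nf

lemma eq_zero_of_L2_mul_cexp {c k : ℂ} (hk : 0 ≤ k.re) (h : L2 fun x : ℝ => c * cexp (k * x)) :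
    c = 0 := by
  have hconst : L2 fun _ => c := by
    refine h.of_le aestronglyMeasurable_const ?_
    filter_upwards [ae_restrict_mem measurableSet_Ioi] with x (hx : 0 < x)
    rw [norm_mul, Complex.norm_exp]
    refine le_mul_of_one_le_right (norm_nonneg c) (Real.one_le_exp ?_)
    simpa using mul_nonneg hk hx.le
  rw [L2, memLp_const_iff two_ne_zero ENNReal.ofNat_ne_top] at hconst
  simpa [Real.volume_Ioi] using hconst

lemma hasDerivWithinAt_Dc {f : ℝ → ℂ} {n : ℕ} (hf : ContDiffOn ℝ (n + 1) f (Ici 0)) {x : ℝ}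
    (hx : 0 ≤ x) : HasDerivWithinAt (Dc f n) (Dc f (n + 1) x) (Ici 0) x := by
  have h := hf.differentiableOn_iteratedDerivWithin (m := n) (by norm_cast; omega)
    (uniqueDiffOn_Ici 0) x hx
  rw [Dc, Dc, iteratedDerivWithin_succ]
  exact h.hasDerivWithinAt

lemma hasDerivAt_cexp_mul (c : ℂ) (x : ℝ) :
    HasDerivAt (fun y : ℝ => cexp (c * y)) (c * cexp (c * x)) x := by
  simpa [mul_comm] using ((hasDerivAt_id x).ofReal_comp.const_mul c).cexp

lemma eq_mul_cexp_of_hasDerivWithinAt {u : ℝ → ℂ} {k : ℂ}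
    (hu : ∀ x, 0 ≤ x → HasDerivWithinAt u (k * u x) (Ici 0) x) {x : ℝ} (hx : 0 ≤ x) :
    u x = u 0 * cexp (k * x) := by
  have hg : ∀ y, 0 ≤ y → HasDerivWithinAt (fun y : ℝ => u y * cexp (-k * y)) 0 (Ici 0) y :=
    fun y hy => ((hu y hy).mul (hasDerivAt_cexp_mul (-k) y).hasDerivWithinAt).congr_deriv
      (by ring)
  have hconst := constant_of_has_deriv_right_zero (a := 0) (b := x)
    (fun y hy => (hg y hy.1).continuousWithinAt.mono Icc_subset_Ici_self)
    (fun y hy => (hg y hy.1).mono (Ici_subset_Ici.mpr hy.1)) x ⟨hx, le_rfl⟩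
  have hx1 : cexp (-k * x) * cexp (k * x) = 1 := by rw [← Complex.exp_add]; simp
  simp only [Complex.ofReal_zero, mul_zero, Complex.exp_zero, mul_one] at hconst
  rw [← hconst, mul_assoc, hx1, mul_one]

lemma eq_zero_of_hasDerivWithinAt_sq_mul_of_L2 {v v' : ℝ → ℂ} {k : ℂ} (hk : 0 ≤ k.re)
    (hv : ∀ x, 0 ≤ x → HasDerivWithinAt v (v' x) (Ici 0) x)
    (hv' : ∀ x, 0 ≤ x → HasDerivWithinAt v' (k ^ 2 * v x) (Ici 0) x)
    (hL2 : L2 v) (hL2' : L2 v') (h0 : v 0 = 0) {x : ℝ} (hx : 0 ≤ x) : v x = 0 := by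
  set u : ℝ → ℂ := fun x => v' x + k * v x
  have hu : ∀ x, 0 ≤ x → HasDerivWithinAt u (k * u x) (Ici 0) x := fun x hx =>
    ((hv' x hx).add ((hv x hx).const_mul k)).congr_deriv (by ring)
  have hu0 : u 0 = 0 := eq_zero_of_L2_mul_cexp hk <|
    L2.congr (f := u) (hL2'.add (hL2.const_mul k)) fun x hx =>
      eq_mul_cexp_of_hasDerivWithinAt hu hx
  have hv_first : ∀ x, 0 ≤ x → HasDerivWithinAt v (-k * v x) (Ici 0) x := fun x hx => by
    have hux : u x = 0 := by rw [eq_mul_cexp_of_hasDerivWithinAt hu hx, hu0, zero_mul]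
    exact (hv x hx).congr_deriv (by linear_combination hux)
  simpa [h0] using eq_mul_cexp_of_hasDerivWithinAt hv_first hx

namespace IsResolventSolution

variable {a : ℝ} {μ : ℂ} {w w₁ w₂ : ℝ → ℂ}

lemma hasDerivWithinAt (h : IsResolventSolution a μ w) {x : ℝ} (hx : 0 ≤ x) :
    HasDerivWithinAt w (Dc w 1 x) (Ici 0) x := by
  simpa [Dc] using hasDerivWithinAt_Dc (n := 0) (by simpa using h.1.of_le one_le_two) hx

lemma hasDerivWithinAt_Dc_one (h : IsResolventSolution a μ w) {x : ℝ} (hx : 0 ≤ x) :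
    HasDerivWithinAt (Dc w 1) (Dc w 2 x) (Ici 0) x :=
  hasDerivWithinAt_Dc (by simpa [one_add_one_eq_two] using h.1) hx

lemma unique {k : ℂ} (hk2 : k ^ 2 = -μ) (hk : 0 ≤ k.re) (h₁ : IsResolventSolution a μ w₁)
    (h₂ : IsResolventSolution a μ w₂) {x : ℝ} (hx : 0 ≤ x) : w₁ x = w₂ x := by
  have hode : ∀ y, 0 ≤ y → Dc w₁ 2 y - Dc w₂ 2 y = k ^ 2 * (w₁ y - w₂ y) := fun y hy => by
    linear_combination (h₂.2.2.2.2.2 y hy) - (h₁.2.2.2.2.2 y hy) - (w₁ y - w₂ y) * hk2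
  refine sub_eq_zero.mp <| eq_zero_of_hasDerivWithinAt_sq_mul_of_L2 (v := w₁ - w₂)
    (v' := Dc w₁ 1 - Dc w₂ 1) hk
    (fun y hy => (h₁.hasDerivWithinAt hy).sub (h₂.hasDerivWithinAt hy))
    (fun y hy => ((h₁.hasDerivWithinAt_Dc_one hy).sub (h₂.hasDerivWithinAt_Dc_one hy)).congr_deriv
      (hode y hy))
    (h₁.2.1.sub h₂.2.1) (h₁.2.2.1.sub h₂.2.2.1) (by simp [h₁.2.2.2.2.1, h₂.2.2.2.2.1]) hx

end IsResolventSolution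

lemma Dc_one_of_hasDerivAt {f f' : ℝ → ℂ} (hf : ∀ x, HasDerivAt f (f' x) x) {x : ℝ}
    (hx : 0 ≤ x) : Dc f 1 x = f' x := by
  rw [Dc, iteratedDerivWithin_one]
  exact (hf x).hasDerivWithinAt.derivWithin (uniqueDiffOn_Ici 0 x hx)

lemma Dc_two_of_hasDerivAt {f f' f'' : ℝ → ℂ} (hf : ∀ x, HasDerivAt f (f' x) x)
    (hf' : ∀ x, HasDerivAt f' (f'' x) x) {x : ℝ} (hx : 0 ≤ x) : Dc f 2 x = f'' x := by
  rw [Dc, iteratedDerivWithin_succ]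
  exact (derivWithin_congr (fun y (hy : 0 ≤ y) => Dc_one_of_hasDerivAt hf hy)
    (Dc_one_of_hasDerivAt hf hx)).trans
      ((hf' x).hasDerivWithinAt.derivWithin (uniqueDiffOn_Ici 0 x hx))

lemma isResolventSolution_of_hasDerivAt {a : ℝ} {μ : ℂ} {w w' w'' : ℝ → ℂ}
    (hw : ∀ x, HasDerivAt w (w' x) x) (hw' : ∀ x, HasDerivAt w' (w'' x) x)
    (hw'' : Continuous w'') (hL2 : L2 w) (hL2' : L2 w') (hL2'' : L2 w'') (h0 : w 0 = 0)
    (hode : ∀ x, 0 ≤ x → -w'' x - μ * w x = ((Real.exp (-(a * x)) : ℝ) : ℂ)) :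
    IsResolventSolution a μ w := by
  have hderiv : deriv w = w' := funext fun x => (hw x).deriv
  have hderiv' : deriv w' = w'' := funext fun x => (hw' x).deriv
  have hC2 : ContDiff ℝ 2 w := by
    rw [show (2 : WithTop ℕ∞) = 1 + 1 from rfl, contDiff_succ_iff_deriv, hderiv,
      contDiff_one_iff_deriv, hderiv']
    exact ⟨fun x => (hw x).differentiableAt, by simp, fun x => (hw' x).differentiableAt, hw''⟩
  refine ⟨hC2.contDiffOn, hL2, hL2'.congr fun x hx => (Dc_one_of_hasDerivAt hw hx).symm,
    hL2''.congr fun x hx => (Dc_two_of_hasDerivAt hw hw' hx).symm, h0, fun x hx => ?_⟩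
  rw [Dc_two_of_hasDerivAt hw hw' hx, hode x hx]

lemma ofReal_exp_neg_mul (a x : ℝ) :
    ((Real.exp (-(a * x)) : ℝ) : ℂ) = cexp (-a * x) := by
  push_cast; ring_nf

lemma exists_isResolventSolution_of_sq_add_ne_zero {a : ℝ} (ha : 0 < a) {μ k : ℂ}
    (hk2 : k ^ 2 = -μ) (hk : 0 < k.re) (hμ : (a : ℂ) ^ 2 + μ ≠ 0) :
    ∃ w, IsResolventSolution a μ w ∧ Dc w 1 0 ≠ 0 := by
  set d : ℂ := -((a : ℂ) ^ 2 + μ)⁻¹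
  have hw : ∀ x : ℝ, HasDerivAt (fun x : ℝ => d * cexp (-a * x) - d * cexp (-k * x))
      (d * -a * cexp (-a * x) - d * -k * cexp (-k * x)) x := fun x =>
    (((hasDerivAt_cexp_mul _ x).const_mul d).sub
      ((hasDerivAt_cexp_mul _ x).const_mul d)).congr_deriv (by ring)
  have hw' : ∀ x : ℝ, HasDerivAt (fun x : ℝ => d * -a * cexp (-a * x) - d * -k * cexp (-k * x))
      (d * -a * -a * cexp (-a * x) - d * -k * -k * cexp (-k * x)) x := fun x =>
    (((hasDerivAt_cexp_mul _ x).const_mul _).sub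
      ((hasDerivAt_cexp_mul _ x).const_mul _)).congr_deriv (by ring)
  have hEa : L2 fun x : ℝ => cexp (-a * x) := by
    simpa using L2_pow_mul_cexp 0 (c := -a) (by simpa)
  have hEk : L2 fun x : ℝ => cexp (-k * x) := by
    simpa using L2_pow_mul_cexp 0 (c := -k) (by simpa)
  refine ⟨fun x : ℝ => d * cexp (-a * x) - d * cexp (-k * x),
    isResolventSolution_of_hasDerivAt hw hw' (by fun_prop)
      ((hEa.const_mul _).sub (hEk.const_mul _)) ((hEa.const_mul _).sub (hEk.const_mul _))
      ((hEa.const_mul _).sub (hEk.const_mul _)) (by simp) fun x _ => ?_, ?_⟩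
  · have hd : d * ((a : ℂ) ^ 2 + μ) = -1 := by simp [d, hμ]
    rw [ofReal_exp_neg_mul]
    linear_combination (-cexp (-a * x)) * hd + (d * cexp (-k * x)) * hk2
  · rw [Dc_one_of_hasDerivAt hw le_rfl]
    have hak : (a : ℂ) ≠ k := fun h => hμ (by rw [← neg_neg μ, ← hk2, ← h]; ring)
    simpa [d, hμ, sub_eq_zero] using hak

lemma exists_isResolventSolution_neg_sq {a : ℝ} (ha : 0 < a) :
    ∃ w, IsResolventSolution a (-(a : ℂ) ^ 2) w ∧ Dc w 1 0 ≠ 0 := by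
  set d : ℂ := (2 * a)⁻¹
  have hE := hasDerivAt_cexp_mul (-a)
  have hxE : ∀ x : ℝ, HasDerivAt (fun x : ℝ => x * cexp (-a * x))
      (cexp (-a * x) + -a * (x * cexp (-a * x))) x := fun x =>
    ((hasDerivAt_id x).ofReal_comp.mul (hE x)).congr_deriv (by simp; ring)
  have hw : ∀ x : ℝ, HasDerivAt (fun x : ℝ => d * (x * cexp (-a * x)))
      (d * cexp (-a * x) + d * -a * (x * cexp (-a * x))) x := fun x =>
    ((hxE x).const_mul d).congr_deriv (by ring)
  have hw' : ∀ x : ℝ, HasDerivAt (fun x : ℝ => d * cexp (-a * x) + d * -a * (x * cexp (-a * x)))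
      (d * -a * cexp (-a * x) + d * -a * (cexp (-a * x) + -a * (x * cexp (-a * x)))) x :=
    fun x => (((hE x).const_mul d).add ((hxE x).const_mul _)).congr_deriv (by ring)
  have hL2E : L2 fun x : ℝ => cexp (-a * x) := by
    simpa using L2_pow_mul_cexp 0 (c := -a) (by simpa)
  have hL2xE : L2 fun x : ℝ => x * cexp (-a * x) := by
    simpa using L2_pow_mul_cexp 1 (c := -a) (by simpa)
  refine ⟨fun x : ℝ => d * (x * cexp (-a * x)),
    isResolventSolution_of_hasDerivAt hw hw' (by fun_prop) (hL2xE.const_mul _)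
      ((hL2E.const_mul _).add (hL2xE.const_mul _))
      ((hL2E.const_mul _).add ((hL2E.add (hL2xE.const_mul _)).const_mul _)) (by simp)
      fun x _ => ?_, ?_⟩
  · have hd : d * (2 * a) = 1 := inv_mul_cancel₀ (by exact_mod_cast (by positivity : 2 * a ≠ 0))
    rw [ofReal_exp_neg_mul]
    linear_combination cexp (-a * x) * hd
  · rw [Dc_one_of_hasDerivAt hw le_rfl]
    simpa [d] using ha.ne'

lemma exists_sq_eq_neg_and_re_pos {μ : ℂ} (hμ : ∀ t : ℝ, 0 ≤ t → μ ≠ t) :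
    ∃ k : ℂ, k ^ 2 = -μ ∧ 0 < k.re := by
  obtain ⟨z, hz⟩ := IsAlgClosed.exists_pow_nat_eq (-μ) two_pos
  have hre : z.re ≠ 0 := fun h0 => hμ (z.im ^ 2) (sq_nonneg _) <| by
    rw [← neg_neg μ, ← hz]
    apply Complex.ext <;> simp [sq, h0]
  rcases hre.lt_or_gt with h | h
  · exact ⟨-z, by rw [neg_sq, hz], by simpa using h⟩
  · exact ⟨z, hz, h⟩

/-- For `μ ∉ [0, ∞)` there is a unique `w ∈ H² ∩ H₀¹` with `−w'' − μw = e^{−ax}`,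
and it satisfies `w'(0) ≠ 0`. -/
theorem os_resolvent_solution_exists_unique
    (a : ℝ) (ha : 0 < a) (μ : ℂ) (hμ : ∀ t : ℝ, 0 ≤ t → μ ≠ (t : ℂ)) :
    (∃ w : ℝ → ℂ, IsResolventSolution a μ w ∧ Dc w 1 0 ≠ 0) ∧
    (∀ w₁ w₂ : ℝ → ℂ, IsResolventSolution a μ w₁ → IsResolventSolution a μ w₂ →
      ∀ x : ℝ, 0 ≤ x → w₁ x = w₂ x) := by
  obtain ⟨k, hk2, hk⟩ := exists_sq_eq_neg_and_re_pos hμ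
  refine ⟨?_, fun w₁ w₂ h₁ h₂ x hx => h₁.unique hk2 hk.le h₂ hx⟩
  by_cases hres : (a : ℂ) ^ 2 + μ = 0
  · obtain rfl : μ = -(a : ℂ) ^ 2 := by linear_combination hres
    exact exists_isResolventSolution_neg_sq ha
  · exact exists_isResolventSolution_of_sq_add_ne_zero ha hk2 hk hres
end

section
/- Let a > 0 and let μ ∈ ℂ with μ ∉ [0,∞). Suppose u : [0,∞) → ℂ is twice continuously differentiable with u, u', u'' in L²(0,∞), u(0) = u'(0) = 0, and −u''(x) − μ·u(x) + u''(0)·e^{−ax} = 0 for all x ≥ 0. Then u is identically zero. (Injectivity of B⁻¹A₀ − λ·id for λ = μ + a² + i·a·R off the half-line M = { μ + a² + i·a·R : μ ≥ 0 }.) -/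
/-!
Pair the equation `u'' + μ u = c e^{-ax}` (with `c = u''(0)`) with `conj (u'' - a² u)`. Every term
except `|u''|² + (a² - μ) |u'|² - μ a² |u|²` is then an exact derivative; for the forcing term this
is `e^{-ax} (ū'' - a² ū) = (e^{-ax} (ū' + a ū))'`, because `e^{-ax}` is killed by `d/dx + a`.
Integrating over `(0, ∞)`, the boundary terms vanish at `0` since `u(0) = u'(0) = 0` and at `∞`
since `u, u' ∈ H¹(0, ∞)` tend to `0`. Hence `μ (‖u'‖² + a² ‖u‖²) = ‖u''‖² + a² ‖u'‖²`, which
forces `‖u‖ = 0` as `μ ∉ [0, ∞)`.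
-/

open MeasureTheory Set Complex

open Filter Topology

theorem hasDerivAt_iteratedDerivWithin {E : Type*} [NormedAddCommGroup E] [NormedSpace ℝ E]
    {f : ℝ → E} {s : Set ℝ} {n : WithTop ℕ∞} {m : ℕ} (hf : ContDiffOn ℝ n f s) (hmn : m < n)
    (hs : UniqueDiffOn ℝ s) {x : ℝ} (hx : x ∈ interior s) :
    HasDerivAt (iteratedDerivWithin m f s) (iteratedDerivWithin (m + 1) f s x) x := by
  rw [iteratedDerivWithin_succ]
  exact ((hf.differentiableOn_iteratedDerivWithin hmn hs) x (interior_subset hx)).hasDerivWithinAt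
    |>.hasDerivAt (mem_interior_iff_mem_nhds.1 hx)

theorem tendsto_atTop_zero_of_hasDerivAt_of_memLp_two {𝕜 : Type*} [RCLike 𝕜] {f f' : ℝ → 𝕜}
    {a : ℝ} (hderiv : ∀ x ∈ Ioi a, HasDerivAt f (f' x) x)
    (hf : MemLp f 2 (volume.restrict (Ioi a))) (hf' : MemLp f' 2 (volume.restrict (Ioi a))) :
    Tendsto f atTop (𝓝 0) := by
  have hsq : Tendsto (fun x => f x * star (f x)) atTop (𝓝 0) :=
    tendsto_zero_of_hasDerivAt_of_integrableOn_Ioi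
      (fun x hx => (hderiv x hx).mul (hderiv x hx).star)
      ((hf'.integrable_mul hf.star).add (hf.integrable_mul hf'.star)) (hf.integrable_mul hf.star)
  have hnorm : ∀ x, ‖f x‖ = √‖f x * star (f x)‖ := fun x => by
    rw [norm_mul, norm_star, Real.sqrt_mul_self (norm_nonneg _)]
  rw [tendsto_zero_iff_norm_tendsto_zero]
  simpa only [← hnorm, norm_zero, Real.sqrt_zero] using hsq.norm.sqrt

theorem eqOn_zero_of_integral_norm_sq_eq_zero {X E : Type*} [TopologicalSpace X]
    [MeasurableSpace X] {ν : Measure X} [ν.IsOpenPosMeasure] [NormedAddCommGroup E]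
    {u : X → E} {s : Set X} (hs : IsOpen s) (hu : ContinuousOn u s) (hu2 : MemLp u 2 (ν.restrict s))
    (h : ∫ x in s, ‖u x‖ ^ 2 ∂ν = 0) : EqOn u 0 s := by
  have hae := (integral_eq_zero_iff_of_nonneg (fun x => by positivity)
    ((memLp_two_iff_integrable_sq_norm hu2.1).1 hu2)).1 h
  refine Measure.eqOn_open_of_ae_eq (μ := ν) ?_ hs hu continuousOn_const
  filter_upwards [hae] with x hx
  simpa using hx

section Energy

variable {u v w : ℝ → ℂ} {a : ℝ} {μ c : ℂ}

theorem hasDerivAt_energy {x : ℝ} (hu : HasDerivAt u (v x) x) (hv : HasDerivAt v (w x) x)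
    (heq : w x + μ * u x = c * Real.exp (-(a * x))) :
    HasDerivAt (fun y => a ^ 2 * (v y * star (u y)) - μ * (u y * star (v y))
        + c * Real.exp (-(a * y)) * (star (v y) + a * star (u y)))
      (((‖w x‖ ^ 2 : ℝ) : ℂ) + (a ^ 2 - μ) * (‖v x‖ ^ 2 : ℝ) - μ * a ^ 2 * (‖u x‖ ^ 2 : ℝ)) x := by
  have hexp : HasDerivAt (fun y : ℝ => (Real.exp (-(a * y)) : ℂ))
      (-a * Real.exp (-(a * x))) x := by
    have hlin : HasDerivAt (fun y : ℝ => -(a * y)) (-a) x := by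
      simpa using ((hasDerivAt_id x).const_mul a).fun_neg
    exact ((Real.hasDerivAt_exp _).comp x hlin).ofReal_comp.congr_deriv (by push_cast; ring)
  have H := (((hv.mul hu.star).const_mul ((a : ℂ) ^ 2)).sub ((hu.mul hv.star).const_mul μ)).add
    ((hexp.const_mul c).mul (hv.star.add (hu.star.const_mul (a : ℂ))))
  refine H.congr_deriv ?_
  have hconj : ∀ z : ℂ, z * star z = ((‖z‖ ^ 2 : ℝ) : ℂ) := fun z => by
    rw [star_def, mul_conj']; push_cast; rfl
  rw [← hconj, ← hconj, ← hconj, Pi.add_apply]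
  linear_combination -(star (w x) - a ^ 2 * star (u x)) * heq

theorem integral_energy_eq_zero (ha : 0 < a)
    (hu : ∀ x ∈ Ioi 0, HasDerivAt u (v x) x) (hv : ∀ x ∈ Ioi 0, HasDerivAt v (w x) x)
    (hu_cont : ContinuousWithinAt u (Ici 0) 0) (hv_cont : ContinuousWithinAt v (Ici 0) 0)
    (hu2 : MemLp u 2 (volume.restrict (Ioi 0))) (hv2 : MemLp v 2 (volume.restrict (Ioi 0)))
    (hw2 : MemLp w 2 (volume.restrict (Ioi 0))) (hu0 : u 0 = 0) (hv0 : v 0 = 0)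
    (heq : ∀ x ∈ Ioi 0, w x + μ * u x = c * Real.exp (-(a * x))) :
    ((∫ x in Ioi 0, ‖w x‖ ^ 2 : ℝ) : ℂ) + (a ^ 2 - μ) * (∫ x in Ioi 0, ‖v x‖ ^ 2 : ℝ)
      - μ * a ^ 2 * (∫ x in Ioi 0, ‖u x‖ ^ 2 : ℝ) = 0 := by
  have hsq : ∀ {f : ℝ → ℂ}, MemLp f 2 (volume.restrict (Ioi 0)) →
      IntegrableOn (fun x => ((‖f x‖ ^ 2 : ℝ) : ℂ)) (Ioi 0) := fun hf =>
    ((memLp_two_iff_integrable_sq_norm hf.1).1 hf).ofReal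
  have hexp : Tendsto (fun x : ℝ => (Real.exp (-(a * x)) : ℂ)) atTop (𝓝 0) := by
    simpa [Function.comp_def] using (Real.tendsto_exp_atBot.comp
      (tendsto_neg_atTop_atBot.comp (tendsto_id.const_mul_atTop ha))).ofReal
  have hu_lim := tendsto_atTop_zero_of_hasDerivAt_of_memLp_two hu hu2 hv2
  have hv_lim := tendsto_atTop_zero_of_hasDerivAt_of_memLp_two hv hv2 hw2
  have hF_lim := (((hv_lim.mul hu_lim.star).const_mul ((a : ℂ) ^ 2)).sub
    ((hu_lim.mul hv_lim.star).const_mul μ)).add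
    ((hexp.const_mul c).mul (hv_lim.star.add (hu_lim.star.const_mul (a : ℂ))))
  simp only [star_zero, mul_zero, sub_zero, add_zero] at hF_lim
  have hF_cont : ContinuousWithinAt (fun y => a ^ 2 * (v y * star (u y)) - μ * (u y * star (v y))
      + c * Real.exp (-(a * y)) * (star (v y) + a * star (u y))) (Ici 0) 0 := by
    fun_prop
  have hw_int := hsq hw2
  have hv_int := (hsq hv2).const_mul ((a : ℂ) ^ 2 - μ)
  have hu_int := (hsq hu2).const_mul (μ * (a : ℂ) ^ 2)
  have h := integral_Ioi_of_hasDerivAt_of_tendsto hF_cont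
    (fun x hx => hasDerivAt_energy (hu x hx) (hv x hx) (heq x hx))
    ((hw_int.add hv_int).sub hu_int) hF_lim
  rw [integral_sub (hw_int.fun_add hv_int) hu_int, integral_add hw_int hv_int, integral_const_mul,
    integral_const_mul, integral_complex_ofReal, integral_complex_ofReal,
    integral_complex_ofReal] at h
  simpa [hu0, hv0] using h

end Energy

theorem eq_zero_of_energy_balance {a : ℝ} (ha : a ≠ 0) {μ : ℂ}
    (hμ : ∀ t : ℝ, 0 ≤ t → μ ≠ (t : ℂ)) {n₀ n₁ n₂ : ℝ} (h₀ : 0 ≤ n₀) (h₁ : 0 ≤ n₁) (h₂ : 0 ≤ n₂)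
    (h : (n₂ : ℂ) + (a ^ 2 - μ) * n₁ - μ * a ^ 2 * n₀ = 0) : n₀ = 0 := by
  have ha2 : 0 < a ^ 2 := by positivity
  by_contra hn₀
  have hden : n₁ + a ^ 2 * n₀ ≠ 0 := by positivity
  refine hμ ((n₂ + a ^ 2 * n₁) / (n₁ + a ^ 2 * n₀)) (by positivity) ?_
  rw [ofReal_div, eq_div_iff (ofReal_ne_zero.2 hden)]
  push_cast
  linear_combination -h

/-- Injectivity of `B⁻¹A₀ − λ·id` for `λ = μ + a² + iaR` off the half-line
`M = {μ + a² + iaR : μ ≥ 0}`: if `u ∈ H² ∩ H₀¹` with `u(0) = u'(0) = 0` satisfies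
`−u'' − μu + u''(0)e^{−ax} = 0`, then `u ≡ 0`. -/
theorem os_BinvA0_injective_off_M
    (a : ℝ) (ha : 0 < a) (μ : ℂ) (hμ : ∀ t : ℝ, 0 ≤ t → μ ≠ (t : ℂ))
    (u : ℝ → ℂ) (hu : ContDiffOn ℝ 2 u (Set.Ici 0))
    (huL2 : L2 u) (hu'L2 : L2 (Dc u 1)) (hu''L2 : L2 (Dc u 2))
    (hu0 : u 0 = 0) (hu'0 : Dc u 1 0 = 0)
    (heq : ∀ x : ℝ, 0 ≤ x →
      -(Dc u 2 x) - μ * u x + Dc u 2 0 * ((Real.exp (-(a * x)) : ℝ) : ℂ) = 0) :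
    ∀ x : ℝ, 0 ≤ x → u x = 0 := by
  have hs : UniqueDiffOn ℝ (Ici (0 : ℝ)) := uniqueDiffOn_Ici 0
  have hderiv : ∀ m : ℕ, m < 2 → ∀ x ∈ Ioi (0 : ℝ), HasDerivAt (Dc u m) (Dc u (m + 1) x) x :=
    fun m hm x hx => hasDerivAt_iteratedDerivWithin hu (by exact_mod_cast hm) hs
      (by rwa [interior_Ici])
  have hcont : ∀ m : ℕ, m ≤ 2 → ContinuousWithinAt (Dc u m) (Ici 0) 0 := fun m hm =>
    hu.continuousOn_iteratedDerivWithin (by exact_mod_cast hm) hs 0 self_mem_Ici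
  have hD0 : Dc u 0 = u := iteratedDerivWithin_zero
  have hu_deriv : ∀ x ∈ Ioi (0 : ℝ), HasDerivAt u (Dc u 1 x) x := hD0 ▸ hderiv 0 two_pos
  have henergy := integral_energy_eq_zero (c := Dc u 2 0) ha hu_deriv (hderiv 1 one_lt_two)
    (hD0 ▸ hcont 0 zero_le_two) (hcont 1 one_le_two) huL2 hu'L2 hu''L2 hu0 hu'0
    (fun x hx => by linear_combination -heq x hx.le)
  have hnorm := eq_zero_of_energy_balance ha.ne' hμ (by positivity) (by positivity)
    (by positivity) henergy
  have hpos : EqOn u 0 (Ioi 0) := eqOn_zero_of_integral_norm_sq_eq_zero isOpen_Ioi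
    (fun x hx => (hu_deriv x hx).continuousAt.continuousWithinAt) huL2 hnorm
  intro x hx
  rcases hx.eq_or_lt with rfl | hx
  exacts [hu0, hpos hx]
end

section
/- Let a > 0, let μ ∈ ℝ with μ ≥ 0, and let γ ∈ ℂ. Suppose u : [0,∞) → ℂ is twice continuously differentiable with u, u', u'' in L²(0,∞), u(0) = u'(0) = 0, and −u''(x) − μ·u(x) + u''(0)·e^{−ax} = γ·(1 − e^{−ax})·e^{−ax} for all x ≥ 0. Then γ = 0 and u is identically zero. (Consequently, for λ on the half-line M = { μ + a² + i·a·R : μ ≥ 0 }, the operator B⁻¹A₀ − λ·id is one-to-one but not onto, hence not a Fredholm operator of index zero; every such λ belongs to the essential spectrum of the Orr–Sommerfeld pencil.) -/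
/-!
Subtracting the ansatz `A e^{-ax} + B e^{-2ax}`, with `A, B` chosen to absorb the forcing terms
`u''(0) e^{-ax}` and `γ(e^{-ax} - e^{-2ax})`, leaves a solution `v` of `v'' = -μ v` with
`v, v' ∈ L²(0, ∞)`. Its energy `‖v'‖² + μ‖v‖²` is constant and integrable, hence zero, so `v ≡ 0`.
The conditions `u(0) = u'(0) = 0` then force `A = B = 0`, hence `γ = (4a² + μ)B = 0` and `u ≡ 0`.
-/

open MeasureTheory Set Complex

open scoped ENNReal

theorem eq_of_hasDerivWithinAt_Ici_zero {E : Type*} [NormedAddCommGroup E] [NormedSpace ℝ E]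
    {f : ℝ → E} {a : ℝ} (hf : ∀ x ∈ Ici a, HasDerivWithinAt f 0 (Ici a) x) {x : ℝ}
    (hx : x ∈ Ici a) : f x = f a :=
  constant_of_has_deriv_right_zero
    (fun y hy => (hf y hy.1).continuousWithinAt.mono Icc_subset_Ici_self)
    (fun y hy => (hf y hy.1).mono (Ici_subset_Ici.mpr hy.1)) x (right_mem_Icc.mpr hx)

theorem eq_zero_of_memLp_Ioi_of_eqOn_const {E : Type*} [NormedAddCommGroup E] {p : ℝ≥0∞}
    (hp₀ : p ≠ 0) (hp : p ≠ ∞) {f : ℝ → E} {a : ℝ} {c : E}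
    (hf : MemLp f p (volume.restrict (Ioi a))) (hfc : EqOn f (fun _ => c) (Ioi a)) : c = 0 := by
  have hc : MemLp (fun _ => c) p (volume.restrict (Ioi a)) :=
    hf.ae_eq (ae_restrict_of_forall_mem measurableSet_Ioi hfc)
  simpa [memLp_const_iff hp₀ hp, Real.volume_Ioi] using hc

theorem eq_zero_of_hasDerivWithinAt_Ici_zero_of_memLp {E : Type*} [NormedAddCommGroup E]
    [NormedSpace ℝ E] {p : ℝ≥0∞} (hp₀ : p ≠ 0) (hp : p ≠ ∞) {f : ℝ → E} {a : ℝ}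
    (hf : ∀ x ∈ Ici a, HasDerivWithinAt f 0 (Ici a) x) (hfp : MemLp f p (volume.restrict (Ioi a)))
    {x : ℝ} (hx : x ∈ Ici a) : f x = 0 := by
  rw [eq_of_hasDerivWithinAt_Ici_zero hf hx]
  exact eq_zero_of_memLp_Ioi_of_eqOn_const hp₀ hp hfp
    fun y hy => eq_of_hasDerivWithinAt_Ici_zero hf (mem_Ici_of_Ioi hy)

theorem eq_zero_of_hasDerivWithinAt_neg_smul_of_memLp_two {F : Type*} [NormedAddCommGroup F]
    [InnerProductSpace ℝ F] {μ a : ℝ} (hμ : 0 ≤ μ) {v w : ℝ → F}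
    (hv : ∀ x ∈ Ici a, HasDerivWithinAt v (w x) (Ici a) x)
    (hw : ∀ x ∈ Ici a, HasDerivWithinAt w (-μ • v x) (Ici a) x)
    (hvL2 : MemLp v 2 (volume.restrict (Ioi a))) (hwL2 : MemLp w 2 (volume.restrict (Ioi a)))
    {x : ℝ} (hx : x ∈ Ici a) : v x = 0 ∧ w x = 0 := by
  have henergy : ∀ y ∈ Ici a,
      HasDerivWithinAt (fun y => ‖w y‖ ^ 2 + μ * ‖v y‖ ^ 2) 0 (Ici a) y := by
    intro y hy
    refine ((hw y hy).norm_sq.add ((hv y hy).norm_sq.const_mul μ)).congr_deriv ?_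
    simp only [real_inner_smul_right, real_inner_comm (v y)]
    ring
  have henergyL1 : MemLp (fun y => ‖w y‖ ^ 2 + μ * ‖v y‖ ^ 2) 1 (volume.restrict (Ioi a)) :=
    memLp_one_iff_integrable.mpr <|
      (hwL2.integrable_norm_pow two_ne_zero).add ((hvL2.integrable_norm_pow two_ne_zero).const_mul μ)
  have hw0 : ∀ y ∈ Ici a, w y = 0 := by
    intro y hy
    have henergy0 := eq_zero_of_hasDerivWithinAt_Ici_zero_of_memLp one_ne_zero
      ENNReal.one_ne_top henergy henergyL1 hy
    have hμv : 0 ≤ μ * ‖v y‖ ^ 2 := by positivity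
    simpa using (by nlinarith [sq_nonneg ‖w y‖] : ‖w y‖ ^ 2 = 0)
  refine ⟨eq_zero_of_hasDerivWithinAt_Ici_zero_of_memLp two_ne_zero ENNReal.ofNat_ne_top
    (fun y hy => ?_) hvL2 hx, hw0 x hx⟩
  simpa [hw0 y hy] using hv y hy

theorem hasDerivWithinAt_iteratedDerivWithin {𝕜 F : Type*} [NontriviallyNormedField 𝕜]
    [NormedAddCommGroup F] [NormedSpace 𝕜 F] {f : 𝕜 → F} {s : Set 𝕜} {n : WithTop ℕ∞} {m : ℕ}
    (hf : ContDiffOn 𝕜 n f s) (hm : m < n) (hs : UniqueDiffOn 𝕜 s) {x : 𝕜} (hx : x ∈ s) :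
    HasDerivWithinAt (iteratedDerivWithin m f s) (iteratedDerivWithin (m + 1) f s x) s x := by
  rw [iteratedDerivWithin_succ]
  exact (hf.differentiableOn_iteratedDerivWithin hm hs x hx).hasDerivWithinAt

noncomputable def expNegMul (b x : ℝ) : ℂ := (Real.exp (-(b * x)) : ℝ)

theorem hasDerivAt_expNegMul (b x : ℝ) : HasDerivAt (expNegMul b) (-b * expNegMul b x) x := by
  have h : HasDerivAt (fun y => Real.exp (-(b * y))) (Real.exp (-(b * x)) * -b) x := by
    simpa using ((hasDerivAt_id x).const_mul b).neg.exp
  refine h.ofReal_comp.congr_deriv ?_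
  push_cast [expNegMul]
  ring

theorem memLp_two_expNegMul {b : ℝ} (hb : 0 < b) :
    MemLp (expNegMul b) 2 (volume.restrict (Ioi 0)) := by
  have h : MemLp (fun x => Real.exp (-(b * x))) 2 (volume.restrict (Ioi 0)) := by
    refine (memLp_two_iff_integrable_sq_norm (by fun_prop)).mpr <|
      (exp_neg_integrableOn_Ioi 0 (by positivity : 0 < 2 * b)).congr
        (Filter.Eventually.of_forall fun x => ?_)
    simp only [Real.norm_eq_abs, abs_of_pos (Real.exp_pos _), ← Real.exp_nat_mul]
    ring_nf
  exact h.ofReal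

theorem expNegMul_mul_self (b x : ℝ) : expNegMul b x * expNegMul b x = expNegMul (2 * b) x := by
  simp only [expNegMul, ← ofReal_mul, ← Real.exp_add]
  ring_nf

theorem exists_eq_expNegMul_of_forall_eq {a μ : ℝ} (ha : 0 < a) (hμ : 0 ≤ μ) {γ : ℂ}
    {u : ℝ → ℂ} (hu : ContDiffOn ℝ 2 u (Ici 0)) (huL2 : L2 u) (hu'L2 : L2 (Dc u 1))
    (heq : ∀ x : ℝ, 0 ≤ x →
      -(Dc u 2 x) - (μ : ℂ) * u x + Dc u 2 0 * expNegMul a x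
        = γ * (1 - expNegMul a x) * expNegMul a x) :
    ∃ A B : ℂ, γ = (4 * a ^ 2 + μ) * B ∧ ∀ x ∈ Ici (0 : ℝ),
      u x = A * expNegMul a x + B * expNegMul (2 * a) x ∧
      Dc u 1 x = -a * A * expNegMul a x - 2 * a * B * expNegMul (2 * a) x := by
  obtain ⟨A, hA⟩ : ∃ A : ℂ, (a ^ 2 + μ) * A = Dc u 2 0 - γ :=
    ⟨_, mul_div_cancel₀ _ (by exact_mod_cast (by positivity : 0 < a ^ 2 + μ).ne')⟩
  obtain ⟨B, hB⟩ : ∃ B : ℂ, (4 * a ^ 2 + μ) * B = γ :=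
    ⟨_, mul_div_cancel₀ _ (by exact_mod_cast (by positivity : 0 < 4 * a ^ 2 + μ).ne')⟩
  set v : ℝ → ℂ := fun x => u x - (A * expNegMul a x + B * expNegMul (2 * a) x)
  set w : ℝ → ℂ := fun x => Dc u 1 x - (-a * A * expNegMul a x - 2 * a * B * expNegMul (2 * a) x)
  have hQ : UniqueDiffOn ℝ (Ici (0 : ℝ)) := uniqueDiffOn_Ici 0
  have hv : ∀ x ∈ Ici (0 : ℝ), HasDerivWithinAt v (w x) (Ici 0) x := by
    intro x hx
    have hu1 : HasDerivWithinAt u (Dc u 1 x) (Ici 0) x := by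
      have h := hasDerivWithinAt_iteratedDerivWithin hu (m := 0) (by norm_num) hQ hx
      rwa [iteratedDerivWithin_zero] at h
    refine (hu1.sub ((((hasDerivAt_expNegMul a x).const_mul A).add
      ((hasDerivAt_expNegMul (2 * a) x).const_mul B)).hasDerivWithinAt)).congr_deriv ?_
    push_cast
    ring
  have hw : ∀ x ∈ Ici (0 : ℝ), HasDerivWithinAt w (-μ • v x) (Ici 0) x := by
    intro x hx
    have hu2 : HasDerivWithinAt (Dc u 1) (Dc u 2 x) (Ici 0) x :=
      hasDerivWithinAt_iteratedDerivWithin hu (m := 1) (by norm_num) hQ hx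
    refine (hu2.sub ((((hasDerivAt_expNegMul a x).const_mul (-a * A)).sub
      ((hasDerivAt_expNegMul (2 * a) x).const_mul (2 * a * B))).hasDerivWithinAt)).congr_deriv ?_
    rw [Complex.real_smul]
    push_cast
    linear_combination -heq x hx - expNegMul a x * hA - expNegMul (2 * a) x * hB
      + γ * expNegMul_mul_self a x
  have hvL2 : MemLp v 2 (volume.restrict (Ioi 0)) :=
    MemLp.sub huL2 (((memLp_two_expNegMul ha).const_mul A).add
      ((memLp_two_expNegMul (by positivity)).const_mul B))
  have hwL2 : MemLp w 2 (volume.restrict (Ioi 0)) :=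
    MemLp.sub hu'L2 (((memLp_two_expNegMul ha).const_mul _).sub
      ((memLp_two_expNegMul (by positivity)).const_mul _))
  refine ⟨A, B, hB.symm, fun x hx => ?_⟩
  obtain ⟨hvx, hwx⟩ := eq_zero_of_hasDerivWithinAt_neg_smul_of_memLp_two hμ hv hw hvL2 hwL2 hx
  exact ⟨sub_eq_zero.mp hvx, sub_eq_zero.mp hwx⟩

theorem os_BinvA0_not_onto_on_M_general
    (a : ℝ) (ha : 0 < a) (μ : ℝ) (hμ : 0 ≤ μ) (γ : ℂ)
    (u : ℝ → ℂ) (hu : ContDiffOn ℝ 2 u (Set.Ici 0))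
    (huL2 : L2 u) (hu'L2 : L2 (Dc u 1))
    (hu0 : u 0 = 0) (hu'0 : Dc u 1 0 = 0)
    (heq : ∀ x : ℝ, 0 ≤ x →
      -(Dc u 2 x) - (μ : ℂ) * u x + Dc u 2 0 * ((Real.exp (-(a * x)) : ℝ) : ℂ)
        = γ * (1 - ((Real.exp (-(a * x)) : ℝ) : ℂ)) * ((Real.exp (-(a * x)) : ℝ) : ℂ)) :
    γ = 0 ∧ ∀ x : ℝ, 0 ≤ x → u x = 0 := by
  obtain ⟨A, B, hγ, hu_eq⟩ := exists_eq_expNegMul_of_forall_eq ha hμ hu huL2 hu'L2 heq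
  obtain ⟨hu0_eq, hu'0_eq⟩ := hu_eq 0 self_mem_Ici
  simp only [expNegMul, mul_zero, neg_zero, Real.exp_zero, ofReal_one, mul_one, hu0, hu'0]
    at hu0_eq hu'0_eq
  have ha' : (a : ℂ) ≠ 0 := ofReal_ne_zero.mpr ha.ne'
  have hB : B = 0 := by
    have : (a : ℂ) * B = 0 := by linear_combination hu'0_eq + a * hu0_eq
    exact (mul_eq_zero.mp this).resolve_left ha'
  have hA : A = 0 := by linear_combination -hu0_eq - hB
  refine ⟨by rw [hγ, hB, mul_zero], fun x hx => ?_⟩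
  rw [(hu_eq x hx).1, hA, hB]
  ring

/-- For `μ ≥ 0`: if `u ∈ H² ∩ H₀²` satisfies
`−u'' − μu + u''(0)e^{−ax} = γ(1 − e^{−ax})e^{−ax}` on `[0, ∞)`, then `γ = 0` and
`u ≡ 0`.  (Hence, for `λ` on the half-line `M = {μ + a² + iaR : μ ≥ 0}`, the operator
`B⁻¹A₀ − λ·id` is one-to-one but not onto, so `λ` is in the essential spectrum.) -/
theorem os_BinvA0_not_onto_on_M
    (a : ℝ) (ha : 0 < a) (μ : ℝ) (hμ : 0 ≤ μ) (γ : ℂ)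
    (u : ℝ → ℂ) (hu : ContDiffOn ℝ 2 u (Set.Ici 0))
    (huL2 : L2 u) (hu'L2 : L2 (Dc u 1)) (hu''L2 : L2 (Dc u 2))
    (hu0 : u 0 = 0) (hu'0 : Dc u 1 0 = 0)
    (heq : ∀ x : ℝ, 0 ≤ x →
      -(Dc u 2 x) - (μ : ℂ) * u x + Dc u 2 0 * ((Real.exp (-(a * x)) : ℝ) : ℂ)
        = γ * (1 - ((Real.exp (-(a * x)) : ℝ) : ℂ)) * ((Real.exp (-(a * x)) : ℝ) : ℂ)) :
    γ = 0 ∧ ∀ x : ℝ, 0 ≤ x → u x = 0 :=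
  os_BinvA0_not_onto_on_M_general a ha μ hμ γ u hu huL2 hu'L2 hu0 hu'0 heq
end
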